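/- arXiv:2410.18512 — 5 statements merged into one kernel-verified Lean document; each statement's English description precedes it below -/
import Mathlib

section
/- Proposition: Assume f and g are injective. Let W = [ξ₀,…,ξ_{N-1}] and V = [η₀,…,η_{N-1}] be cylinders with ℙ⁻(W) > 0, ℙ⁻(V) > 0, ξ₀ = η₀, ξ_{N-1} = η_{N-1}, ℙ⁻(W) ≤ ℙ⁻(V), and (f_{ξ₀}∘⋯∘f_{ξ_{N-1}})(I) ∩ (f_{η₀}∘⋯∘f_{η_{N-1}})(I) = ∅. Then for every n ≥ 1 and every x ∈ I, ℙ⁻(S_{nN}ˣ) ≤ ℙ⁻(Σ_n^W). -/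
open MeasureTheory Filter Topology Set
open scoped BigOperators

noncomputable section

/-- Tail sum ∑_{j ≥ i} p_j. -/
def tailSum (p : ℕ → ℝ) (i : ℕ) : ℝ := ∑' j : ℕ, p (i + j)

/-- Invariant distribution m_i = (∑_{j≥i} p_j)/(1+E). -/
def mdist (p : ℕ → ℝ) (E : ℝ) (i : ℕ) : ℝ := tailSum p i / (1 + E)

/-- Transition matrix entries: p_{0j} = p_j, p_{(k+1)k} = 1, else 0. -/
def Ptrans (p : ℕ → ℝ) (i j : ℕ) : ℝ := if i = 0 then p j else if i = j + 1 then 1 else 0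

/-- Reversed transition matrix q_{ij} = (m_j / m_i) · p_{ji}. -/
def qtrans (p : ℕ → ℝ) (E : ℝ) (i j : ℕ) : ℝ := mdist p E j / mdist p E i * Ptrans p j i

/-- Cylinder set of length n determined by the first n values of ξ. -/
def cyl (ξ : ℕ → ℕ) (n : ℕ) : Set (ℕ → ℕ) := {ω | ∀ i < n, ω i = ξ i}

/-- Probability assigned by ℙ⁻ to the cylinder [ξ₀,…,ξ_{n-1}]. -/
def cylProbQ (p : ℕ → ℝ) (E : ℝ) (ξ : ℕ → ℕ) (n : ℕ) : ℝ :=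
  mdist p E (ξ 0) * ∏ i ∈ Finset.range (n - 1), qtrans p E (ξ i) (ξ (i + 1))

/-- Probability assigned by ℙ to the cylinder [ξ₀,…,ξ_{n-1}]. -/
def cylProbP (p : ℕ → ℝ) (E : ℝ) (ξ : ℕ → ℕ) (n : ℕ) : ℝ :=
  mdist p E (ξ 0) * ∏ i ∈ Finset.range (n - 1), Ptrans p (ξ i) (ξ (i + 1))

/-- The family f₀ = g, f_k = f for k ≥ 1. -/
def fseq (a b : ℝ) (g f : Set.Icc a b → Set.Icc a b) : ℕ → Set.Icc a b → Set.Icc a b :=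
  fun k => if k = 0 then g else f

/-- itf fI ξ n = f_{ξ₀} ∘ f_{ξ₁} ∘ ⋯ ∘ f_{ξ_{n-1}}. -/
def itf (a b : ℝ) (fI : ℕ → Set.Icc a b → Set.Icc a b) (ξ : ℕ → ℕ) :
    ℕ → Set.Icc a b → Set.Icc a b
  | 0 => id
  | n + 1 => fun x => itf a b fI ξ n (fI (ξ n) x)

/-- itfRev fI a n = f_{a_{n-1}} ∘ ⋯ ∘ f_{a_0}  (i.e. f_{a_n}∘⋯∘f_{a_1} with 1-based indexing). -/
def itfRev (a b : ℝ) (fI : ℕ → Set.Icc a b → Set.Icc a b) (c : ℕ → ℕ) :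
    ℕ → Set.Icc a b → Set.Icc a b
  | 0 => id
  | n + 1 => fun x => fI (c n) (itfRev a b fI c n x)

/-- I_ξ = ⋂_{n ≥ 1} (f_{ξ₀}∘⋯∘f_{ξ_{n-1}})(I). -/
def Iset (a b : ℝ) (fI : ℕ → Set.Icc a b → Set.Icc a b) (ξ : ℕ → ℕ) : Set (Set.Icc a b) :=
  ⋂ n : ℕ, itf a b fI ξ (n + 1) '' Set.univ

/-- S = {ξ : diam I_ξ = 0}. -/
def Sset (a b : ℝ) (fI : ℕ → Set.Icc a b → Set.Icc a b) : Set (ℕ → ℕ) :=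
  {ξ | EMetric.diam (Iset a b fI ξ) = 0}

/-- The j-th sliceM of a measure on ℕ × I:  μ_j(C) = μ̂({j} × C). -/
def sliceM (a b : ℝ) (μ : Measure (ℕ × Set.Icc a b)) (k : ℕ) : Measure (Set.Icc a b) :=
  Measure.map Prod.snd (μ.restrict ({k} ×ˢ (Set.univ : Set (Set.Icc a b))))

/-- The Markov operator T:  (Tμ̂)({j}×C) = μ_{j+1}(f_j⁻¹ C) + p_j·μ₀(f_j⁻¹ C). -/
def TOp (a b : ℝ) (p : ℕ → ℝ) (fI : ℕ → Set.Icc a b → Set.Icc a b)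
    (μ : Measure (ℕ × Set.Icc a b)) : Measure (ℕ × Set.Icc a b) :=
  Measure.sum fun j =>
    Measure.map (fun x => (j, fI j x))
      (sliceM a b μ (j + 1) + ENNReal.ofReal (p j) • sliceM a b μ 0)

/-- Extend ξ : Fin n → ℕ to ℕ → ℕ by 0. -/
def padSeq {n : ℕ} (ξ : Fin n → ℕ) : ℕ → ℕ := fun i => if h : i < n then ξ ⟨i, h⟩ else 0

/-- S_nˣ = {ξ : x ∈ I_ξⁿ}. -/
def SnX (a b : ℝ) (fI : ℕ → Set.Icc a b → Set.Icc a b) (x : Set.Icc a b) (n : ℕ) :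
    Set (ℕ → ℕ) :=
  {ξ | x ∈ itf a b fI ξ n '' Set.univ}

/-- Σ_n^W = {ω : σ^{iN}(ω) ∉ W for i = 0,…,n-1}, for W the cylinder [ξ₀,…,ξ_{N-1}]. -/
def SigW (ξ : ℕ → ℕ) (N n : ℕ) : Set (ℕ → ℕ) :=
  {ω | ∀ i < n, ¬ (∀ k < N, ω (i * N + k) = ξ k)}

open Classical in
/-- The block-replacement map H_n: replace every length-N block equal to (ξ₀,…,ξ_{N-1})
by (η₀,…,η_{N-1}). -/
noncomputable def Hn (ξ η : ℕ → ℕ) (N : ℕ) (c : ℕ → ℕ) : ℕ → ℕ :=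
  fun i => if (∀ k < N, c (i / N * N + k) = ξ k) then η (i % N) else c i

/-- The splitting condition. -/
def Splitting (a b : ℝ) (fI : ℕ → Set.Icc a b → Set.Icc a b) (P : Measure (ℕ → ℕ)) : Prop :=
  ∃ (l r : ℕ) (c d : ℕ → ℕ), 1 ≤ l ∧ 1 ≤ r ∧
    0 < P (cyl c l) ∧ 0 < P (cyl d r) ∧ c (l - 1) = d (r - 1) ∧
    (itfRev a b fI c l '' Set.univ) ∩ (itfRev a b fI d r '' Set.univ) = ∅

-- helpers part 1
namespace Stmt14Aux

theorem itf_congr (a b : ℝ) (fI : ℕ → Set.Icc a b → Set.Icc a b) (c d : ℕ → ℕ) :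
    ∀ n : ℕ, (∀ i < n, c i = d i) → ∀ x, itf a b fI c n x = itf a b fI d n x
  | 0, _, _ => rfl
  | n+1, h, x => by
      simp only [itf]
      rw [h n (Nat.lt_succ_self n)]
      exact itf_congr a b fI c d n (fun i hi => h i (hi.trans (Nat.lt_succ_self n))) _

theorem fseq_inj (a b : ℝ) (f g : Set.Icc a b → Set.Icc a b)
    (hfi : Function.Injective f) (hgi : Function.Injective g) (k : ℕ) :
    Function.Injective (fseq a b g f k) := by
  unfold fseq; split <;> assumption

theorem itf_inj (a b : ℝ) (f g : Set.Icc a b → Set.Icc a b)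
    (hfi : Function.Injective f) (hgi : Function.Injective g) (c : ℕ → ℕ) :
    ∀ n : ℕ, Function.Injective (itf a b (fseq a b g f) c n)
  | 0 => fun _ _ h => h
  | n+1 => by
      intro x y h
      simp only [itf] at h
      exact fseq_inj a b f g hfi hgi (c n) (itf_inj a b f g hfi hgi c n h)

theorem itf_add (a b : ℝ) (fI : ℕ → Set.Icc a b → Set.Icc a b) (c : ℕ → ℕ) (m : ℕ) :
    ∀ (k : ℕ) (x), itf a b fI c (m + k) x = itf a b fI c m (itf a b fI (fun i => c (m + i)) k x)
  | 0, _ => rfl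
  | k+1, x => by
      show itf a b fI c ((m + k) + 1) x = _
      simp only [itf]
      exact itf_add a b fI c m k _

theorem itf_image_mono (a b : ℝ) (fI : ℕ → Set.Icc a b → Set.Icc a b) (c : ℕ → ℕ)
    {m M : ℕ} (h : m ≤ M) {x : Set.Icc a b}
    (hx : x ∈ itf a b fI c M '' Set.univ) : x ∈ itf a b fI c m '' Set.univ := by
  obtain ⟨y, -, rfl⟩ := hx
  obtain ⟨k, rfl⟩ := Nat.exists_eq_add_of_le h
  rw [itf_add a b fI c m k y]
  exact ⟨_, Set.mem_univ _, rfl⟩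

theorem cyl_measurableSet (c : ℕ → ℕ) (n : ℕ) : MeasurableSet (cyl c n) := by
  have h : cyl c n = ⋂ (i : ℕ) (_ : i < n), (fun ω : ℕ → ℕ => ω i) ⁻¹' {c i} := by
    ext ω; simp [cyl]
  rw [h]
  exact MeasurableSet.iInter fun i => MeasurableSet.iInter fun _ =>
    (measurable_pi_apply i) (measurableSet_singleton _)

theorem measure_cylword (Pm : Measure (ℕ → ℕ)) (M : ℕ) (Φ : (Fin M → ℕ) → Prop) :
    Pm {ω | Φ (fun i => ω i.1)} =
      ∑' w : {w : Fin M → ℕ // Φ w}, Pm (cyl (padSeq w.1) M) := by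
  have hset : {ω : ℕ → ℕ | Φ (fun i => ω i.1)} =
      ⋃ w : {w : Fin M → ℕ // Φ w}, cyl (padSeq w.1) M := by
    ext ω
    constructor
    · intro h
      refine Set.mem_iUnion.2 ⟨⟨fun i => ω i.1, h⟩, fun i hi => ?_⟩
      simp [padSeq, hi]
    · intro h
      obtain ⟨w, hw⟩ := Set.mem_iUnion.1 h
      have hww : (fun i : Fin M => ω i.1) = w.1 := by
        funext i
        have h2 := hw i.1 i.2
        simpa [padSeq, i.2] using h2
      show Φ _
      rw [hww]; exact w.2
  rw [hset]
  refine measure_iUnion ?_ fun w => cyl_measurableSet _ _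
  intro w1 w2 hne
  rw [Function.onFun, Set.disjoint_left]
  intro ω h1 h2
  apply hne
  ext i
  have e1 := h1 i.1 i.2
  have e2 := h2 i.1 i.2
  simp only [padSeq, i.2, dif_pos] at e1 e2
  rw [← e1, ← e2]

end Stmt14Aux

namespace Stmt14Aux

theorem mdist_nonneg (p : ℕ → ℝ) (E : ℝ) (hp : ∀ n, 0 ≤ p n) (hE : 0 ≤ E) (i : ℕ) :
    0 ≤ mdist p E i := by
  unfold mdist tailSum
  refine div_nonneg (tsum_nonneg fun j => hp _) (by linarith)

theorem qtrans_nonneg (p : ℕ → ℝ) (E : ℝ) (hp : ∀ n, 0 ≤ p n) (hE : 0 ≤ E) (i j : ℕ) :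
    0 ≤ qtrans p E i j := by
  unfold qtrans Ptrans
  refine mul_nonneg (div_nonneg (mdist_nonneg p E hp hE j) (mdist_nonneg p E hp hE i)) ?_
  split
  · exact hp _
  · split
    · exact zero_le_one
    · exact le_refl 0

theorem key_prod (p : ℕ → ℝ) (E : ℝ)
    (hq : ∀ i j, 0 ≤ qtrans p E i j) (hm : ∀ i, 0 ≤ mdist p E i)
    (N : ℕ) (hN : 1 ≤ N) (ξ η : ℕ → ℕ)
    (h0 : ξ 0 = η 0) (hN1 : ξ (N - 1) = η (N - 1))
    (hPle : ∏ k ∈ Finset.range (N-1), qtrans p E (ξ k) (ξ (k+1)) ≤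
            ∏ k ∈ Finset.range (N-1), qtrans p E (η k) (η (k+1))) :
    ∀ n, 1 ≤ n → ∀ u v : ℕ → ℕ,
      (∀ j < n, (∀ k < N, v (j*N+k) = u (j*N+k)) ∨
        ((∀ k < N, u (j*N+k) = ξ k) ∧ (∀ k < N, v (j*N+k) = η k))) →
      cylProbQ p E u (n*N) ≤ cylProbQ p E v (n*N) := by
  intro n hn
  induction n, hn using Nat.le_induction with
  | base =>
    intro u v hblock
    have hb := hblock 0 Nat.one_pos
    simp only [Nat.zero_mul, Nat.zero_add] at hb
    unfold cylProbQ
    simp only [Nat.one_mul]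
    rcases hb with hb | ⟨hbu, hbv⟩
    · apply le_of_eq
      rw [hb 0 (by omega)]
      congr 1
      refine Finset.prod_congr rfl fun i hi => ?_
      rw [Finset.mem_range] at hi
      rw [hb i (by omega), hb (i+1) (by omega)]
    · rw [hbu 0 (by omega), hbv 0 (by omega), h0]
      refine mul_le_mul_of_nonneg_left ?_ (hm _)
      have e1 : ∏ i ∈ Finset.range (N-1), qtrans p E (u i) (u (i+1)) =
          ∏ k ∈ Finset.range (N-1), qtrans p E (ξ k) (ξ (k+1)) := by
        refine Finset.prod_congr rfl fun i hi => ?_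
        rw [Finset.mem_range] at hi
        rw [hbu i (by omega), hbu (i+1) (by omega)]
      have e2 : ∏ i ∈ Finset.range (N-1), qtrans p E (v i) (v (i+1)) =
          ∏ k ∈ Finset.range (N-1), qtrans p E (η k) (η (k+1)) := by
        refine Finset.prod_congr rfl fun i hi => ?_
        rw [Finset.mem_range] at hi
        rw [hbv i (by omega), hbv (i+1) (by omega)]
      rw [e1, e2]; exact hPle
  | succ n hn ih =>
    intro u v hblock
    obtain ⟨m, rfl⟩ := Nat.exists_eq_add_of_le hn
    set n := 1 + m with hn'
    have hnN : 1 ≤ n * N := Nat.one_le_iff_ne_zero.2 (by positivity)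
    have hsplit : (n+1)*N - 1 = (n*N - 1) + N := by
      have : (n+1)*N = n*N + N := by ring
      omega
    have pr1 : ∀ (F : ℕ → ℝ), ∏ x ∈ Finset.range N, F x =
        F 0 * ∏ i ∈ Finset.range (N-1), F (i+1) := by
      intro F
      obtain ⟨K, rfl⟩ : ∃ K, N = K + 1 := ⟨N - 1, by omega⟩
      simp [Finset.prod_range_succ', mul_comm]
    have expand : ∀ w : ℕ → ℕ, cylProbQ p E w ((n+1)*N) =
        cylProbQ p E w (n*N) *
        (qtrans p E (w (n*N - 1)) (w (n*N)) *
          ∏ i ∈ Finset.range (N-1), qtrans p E (w (n*N + i)) (w (n*N + i + 1))) := by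
      intro w
      unfold cylProbQ
      rw [hsplit, Finset.prod_range_add, ← mul_assoc]
      congr 1
      rw [pr1 fun x => qtrans p E (w (n*N - 1 + x)) (w (n*N - 1 + x + 1))]
      congr 1
      · congr 2 <;> omega
      · refine Finset.prod_congr rfl fun i hi => ?_
        congr 2 <;> omega
    rw [expand u, expand v]
    -- junction equality
    have hjlast : u (n*N - 1) = v (n*N - 1) := by
      have hb := hblock m (by omega)
      have hidx : m*N + (N-1) = n*N - 1 := by
        have : n*N = m*N + N := by rw [hn']; ring
        omega
      rcases hb with hb | ⟨hbu, hbv⟩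
      · rw [← hidx, hb (N-1) (by omega)]
      · rw [← hidx, hbu (N-1) (by omega), hbv (N-1) (by omega), hN1]
    have hjfirst : u (n*N) = v (n*N) := by
      have hb := hblock n (by omega)
      rcases hb with hb | ⟨hbu, hbv⟩
      · have := hb 0 (by omega); simpa using this.symm
      · have h1 := hbu 0 (by omega); have h2 := hbv 0 (by omega)
        simp only [Nat.add_zero] at h1 h2
        rw [h1, h2, h0]
    -- block n inequality
    have hBle : ∏ i ∈ Finset.range (N-1), qtrans p E (u (n*N + i)) (u (n*N + i + 1)) ≤
        ∏ i ∈ Finset.range (N-1), qtrans p E (v (n*N + i)) (v (n*N + i + 1)) := by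
      have hb := hblock n (by omega)
      rcases hb with hb | ⟨hbu, hbv⟩
      · apply le_of_eq
        refine (Finset.prod_congr rfl fun i hi => ?_).symm
        rw [Finset.mem_range] at hi
        have e1 := hb i (by omega)
        have e2 : v (n*N + (i+1)) = u (n*N + (i+1)) := hb (i+1) (by omega)
        rw [e1, ← Nat.add_assoc] at *
        rw [e2]
      · have e1 : ∏ i ∈ Finset.range (N-1), qtrans p E (u (n*N + i)) (u (n*N + i + 1)) =
            ∏ k ∈ Finset.range (N-1), qtrans p E (ξ k) (ξ (k+1)) := by
          refine Finset.prod_congr rfl fun i hi => ?_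
          rw [Finset.mem_range] at hi
          have := hbu (i+1) (by omega)
          rw [hbu i (by omega), ← Nat.add_assoc] at *
          rw [this]
        have e2 : ∏ i ∈ Finset.range (N-1), qtrans p E (v (n*N + i)) (v (n*N + i + 1)) =
            ∏ k ∈ Finset.range (N-1), qtrans p E (η k) (η (k+1)) := by
          refine Finset.prod_congr rfl fun i hi => ?_
          rw [Finset.mem_range] at hi
          have := hbv (i+1) (by omega)
          rw [hbv i (by omega), ← Nat.add_assoc] at *
          rw [this]
        rw [e1, e2]; exact hPle
    have hAle : cylProbQ p E u (n*N) ≤ cylProbQ p E v (n*N) :=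
      ih u v (fun j hj => hblock j (by omega))
    have hBnn : 0 ≤ ∏ i ∈ Finset.range (N-1), qtrans p E (u (n*N + i)) (u (n*N + i + 1)) :=
      Finset.prod_nonneg fun i _ => hq _ _
    have hAnn : 0 ≤ cylProbQ p E v (n*N) := by
      unfold cylProbQ
      exact mul_nonneg (hm _) (Finset.prod_nonneg fun i _ => hq _ _)
    rw [hjlast, hjfirst]
    exact mul_le_mul hAle
      (mul_le_mul_of_nonneg_left hBle (hq _ _))
      (mul_nonneg (hq _ _) hBnn) hAnn

end Stmt14Aux

namespace Stmt14Aux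

theorem Hn_block (ξ η : ℕ → ℕ) (N : ℕ) (hN : 1 ≤ N) (c : ℕ → ℕ) (j k : ℕ) (hk : k < N) :
    Hn ξ η N c (j*N+k) = if (∀ l < N, c (j*N+l) = ξ l) then η k else c (j*N+k) := by
  have hdiv : (j*N+k)/N = j := by
    rw [Nat.mul_comm, Nat.mul_add_div (by omega), Nat.div_eq_of_lt hk, Nat.add_zero]
  have hmod : (j*N+k) % N = k := by
    rw [Nat.mul_comm, Nat.mul_add_mod, Nat.mod_eq_of_lt hk]
  unfold Hn
  rw [hdiv, hmod]

theorem hmap_inj (a b : ℝ) (f g : Set.Icc a b → Set.Icc a b)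
    (hfi : Function.Injective f) (hgi : Function.Injective g)
    (N : ℕ) (hN : 1 ≤ N) (ξ η : ℕ → ℕ)
    (hdisj : (itf a b (fseq a b g f) ξ N '' Set.univ) ∩
        (itf a b (fseq a b g f) η N '' Set.univ) = ∅)
    (n : ℕ) (x : Set.Icc a b) (w1 w2 : Fin (n*N) → ℕ)
    (hx1 : x ∈ itf a b (fseq a b g f) (padSeq w1) (n*N) '' Set.univ)
    (hx2 : x ∈ itf a b (fseq a b g f) (padSeq w2) (n*N) '' Set.univ)
    (heq : ∀ i : ℕ, i < n*N → Hn ξ η N (padSeq w1) i = Hn ξ η N (padSeq w2) i) :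
    w1 = w2 := by
  classical
  set fI := fseq a b g f with hfI
  set u1 := padSeq w1 with hu1
  set u2 := padSeq w2 with hu2
  have main : ∀ j ≤ n, ∀ i < j*N, u1 i = u2 i := by
    intro j
    induction j with
    | zero => intro _ i hi; omega
    | succ j ihj =>
      intro hjn i hi
      have hj : j < n := by omega
      have ih : ∀ i < j*N, u1 i = u2 i := ihj (by omega)
      -- enough to handle block j
      have hblockeq : ∀ k < N, u1 (j*N+k) = u2 (j*N+k) := by
        by_cases hC1 : ∀ l < N, u1 (j*N+l) = ξ l
        · by_cases hC2 : ∀ l < N, u2 (j*N+l) = ξ l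
          · intro k hk; rw [hC1 k hk, hC2 k hk]
          · -- contradiction case: block j of u2 equals η
            exfalso
            have hbv : ∀ k < N, u2 (j*N+k) = η k := by
              intro k hk
              have hidx : j*N+k < n*N := by
                calc j*N+k < j*N+N := by omega
                _ = (j+1)*N := by ring
                _ ≤ n*N := Nat.mul_le_mul_right N (by omega)
              have h := heq (j*N+k) hidx
              rw [Hn_block ξ η N hN u1 j k hk, Hn_block ξ η N hN u2 j k hk,
                if_pos hC1, if_neg hC2] at h
              exact h.symm
            -- x lies in both images
            have hm1 : x ∈ itf a b fI u1 ((j+1)*N) '' Set.univ :=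
              itf_image_mono a b fI u1 (Nat.mul_le_mul_right N (by omega)) hx1
            have hm2 : x ∈ itf a b fI u2 ((j+1)*N) '' Set.univ :=
              itf_image_mono a b fI u2 (Nat.mul_le_mul_right N (by omega)) hx2
            obtain ⟨y1, -, hy1⟩ := hm1
            obtain ⟨y2, -, hy2⟩ := hm2
            have hsplit : (j+1)*N = j*N + N := by ring
            rw [hsplit] at hy1 hy2
            rw [itf_add a b fI u1 (j*N) N y1] at hy1
            rw [itf_add a b fI u2 (j*N) N y2] at hy2
            have e1 : itf a b fI (fun i => u1 (j*N + i)) N y1 = itf a b fI ξ N y1 :=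
              itf_congr a b fI _ ξ N (fun i hi => hC1 i hi) y1
            have e2 : itf a b fI (fun i => u2 (j*N + i)) N y2 = itf a b fI η N y2 :=
              itf_congr a b fI _ η N (fun i hi => hbv i hi) y2
            rw [e1] at hy1
            rw [e2] at hy2
            have eprefix : itf a b fI u2 (j*N) (itf a b fI η N y2) =
                itf a b fI u1 (j*N) (itf a b fI η N y2) :=
              (itf_congr a b fI u1 u2 (j*N) ih _).symm
            have : itf a b fI ξ N y1 = itf a b fI η N y2 := by
              apply itf_inj a b f g hfi hgi u1 (j*N)
              rw [hy1, ← hy2, eprefix]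
            have hmem : itf a b fI ξ N y1 ∈
                (itf a b fI ξ N '' Set.univ) ∩ (itf a b fI η N '' Set.univ) :=
              ⟨⟨y1, Set.mem_univ _, rfl⟩, this ▸ ⟨y2, Set.mem_univ _, rfl⟩⟩
            rw [hdisj] at hmem
            exact hmem
        · by_cases hC2 : ∀ l < N, u2 (j*N+l) = ξ l
          · -- symmetric contradiction
            exfalso
            have hbv : ∀ k < N, u1 (j*N+k) = η k := by
              intro k hk
              have hidx : j*N+k < n*N := by
                calc j*N+k < j*N+N := by omega
                _ = (j+1)*N := by ring
                _ ≤ n*N := Nat.mul_le_mul_right N (by omega)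
              have h := heq (j*N+k) hidx
              rw [Hn_block ξ η N hN u1 j k hk, Hn_block ξ η N hN u2 j k hk,
                if_neg hC1, if_pos hC2] at h
              exact h
            have hm1 : x ∈ itf a b fI u1 ((j+1)*N) '' Set.univ :=
              itf_image_mono a b fI u1 (Nat.mul_le_mul_right N (by omega)) hx1
            have hm2 : x ∈ itf a b fI u2 ((j+1)*N) '' Set.univ :=
              itf_image_mono a b fI u2 (Nat.mul_le_mul_right N (by omega)) hx2
            obtain ⟨y1, -, hy1⟩ := hm1
            obtain ⟨y2, -, hy2⟩ := hm2
            have hsplit : (j+1)*N = j*N + N := by ring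
            rw [hsplit] at hy1 hy2
            rw [itf_add a b fI u1 (j*N) N y1] at hy1
            rw [itf_add a b fI u2 (j*N) N y2] at hy2
            have e1 : itf a b fI (fun i => u1 (j*N + i)) N y1 = itf a b fI η N y1 :=
              itf_congr a b fI _ η N (fun i hi => hbv i hi) y1
            have e2 : itf a b fI (fun i => u2 (j*N + i)) N y2 = itf a b fI ξ N y2 :=
              itf_congr a b fI _ ξ N (fun i hi => hC2 i hi) y2
            rw [e1] at hy1
            rw [e2] at hy2
            have eprefix : itf a b fI u2 (j*N) (itf a b fI ξ N y2) =
                itf a b fI u1 (j*N) (itf a b fI ξ N y2) :=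
              (itf_congr a b fI u1 u2 (j*N) ih _).symm
            have : itf a b fI η N y1 = itf a b fI ξ N y2 := by
              apply itf_inj a b f g hfi hgi u1 (j*N)
              rw [hy1, ← hy2, eprefix]
            have hmem : itf a b fI ξ N y2 ∈
                (itf a b fI ξ N '' Set.univ) ∩ (itf a b fI η N '' Set.univ) :=
              ⟨⟨y2, Set.mem_univ _, rfl⟩, this ▸ ⟨y1, Set.mem_univ _, rfl⟩⟩
            rw [hdisj] at hmem
            exact hmem
          · -- neither block is ξ: Hn acts as identity
            intro k hk
            have hidx : j*N+k < n*N := by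
              calc j*N+k < j*N+N := by omega
              _ = (j+1)*N := by ring
              _ ≤ n*N := Nat.mul_le_mul_right N (by omega)
            have h := heq (j*N+k) hidx
            rw [Hn_block ξ η N hN u1 j k hk, Hn_block ξ η N hN u2 j k hk,
              if_neg hC1, if_neg hC2] at h
            exact h
      by_cases hij : i < j*N
      · exact ih i hij
      · obtain ⟨d, hd⟩ : ∃ d, i = j*N + d := ⟨i - j*N, by omega⟩
        have hdN : d < N := by
          have h' : (j+1)*N = j*N+N := by ring
          omega
        rw [hd]
        exact hblockeq d hdN
  funext i
  have h := main n le_rfl i.1 i.2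
  rw [hu1, hu2] at h
  simpa [padSeq, i.2] using h

end Stmt14Aux


/-- Proposition: for cylinders W = [ξ₀,…,ξ_{N-1}], V = [η₀,…,η_{N-1}]
with ξ₀ = η₀, ξ_{N-1} = η_{N-1}, ℙ⁻(W) ≤ ℙ⁻(V) and disjoint images,
ℙ⁻(S_{nN}ˣ) ≤ ℙ⁻(Σ_n^W). -/
theorem stmt14 (a b : ℝ) (hab : a < b)
    (f g : Set.Icc a b → Set.Icc a b) (hfc : Continuous f) (hgc : Continuous g)
    (hfi : Function.Injective f) (hgi : Function.Injective g)
    (p : ℕ → ℝ) (E : ℝ)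
    (hp : ∀ n, 0 ≤ p n) (hp1 : HasSum p 1) (hp0 : 0 < p 0)
    (hmean : Summable fun n : ℕ => (n : ℝ) * p n)
    (hE : E = ∑' n : ℕ, (n : ℝ) * p n)
    (hsupp : ∀ N : ℕ, ∃ n, N ≤ n ∧ 0 < p n)
    (Pm : Measure (ℕ → ℕ)) [IsProbabilityMeasure Pm]
    (hPm : ∀ n, 1 ≤ n → ∀ ξ : ℕ → ℕ, Pm (cyl ξ n) = ENNReal.ofReal (cylProbQ p E ξ n))
    (N : ℕ) (hN : 1 ≤ N) (ξ η : ℕ → ℕ)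
    (hWpos : 0 < Pm (cyl ξ N)) (hVpos : 0 < Pm (cyl η N))
    (h0 : ξ 0 = η 0) (hN1 : ξ (N - 1) = η (N - 1))
    (hle : Pm (cyl ξ N) ≤ Pm (cyl η N))
    (hdisj : (itf a b (fseq a b g f) ξ N '' Set.univ) ∩
        (itf a b (fseq a b g f) η N '' Set.univ) = ∅) :
    ∀ n, 1 ≤ n → ∀ x : Set.Icc a b,
      Pm (SnX a b (fseq a b g f) x (n * N)) ≤ Pm (SigW ξ N n) := by
  intro n hn x
  classical
  have hM1 : 1 ≤ n * N := Nat.one_le_iff_ne_zero.2 (by positivity)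
  have hE0 : 0 ≤ E := by
    rw [hE]; exact tsum_nonneg fun k => mul_nonneg (Nat.cast_nonneg k) (hp k)
  have hm := Stmt14Aux.mdist_nonneg p E hp hE0
  have hq := Stmt14Aux.qtrans_nonneg p E hp hE0
  -- extract the block-product inequality from hle
  have hcQξ : 0 < cylProbQ p E ξ N := by
    rw [hPm N hN ξ] at hWpos; exact ENNReal.ofReal_pos.1 hWpos
  have hcQη : 0 < cylProbQ p E η N := by
    rw [hPm N hN η] at hVpos; exact ENNReal.ofReal_pos.1 hVpos
  have hcQle : cylProbQ p E ξ N ≤ cylProbQ p E η N := by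
    rw [hPm N hN ξ, hPm N hN η] at hle
    exact (ENNReal.ofReal_le_ofReal_iff hcQη.le).1 hle
  have hm0pos : 0 < mdist p E (ξ 0) := by
    rcases (hm (ξ 0)).lt_or_eq with h | h
    · exact h
    · exfalso
      unfold cylProbQ at hcQξ
      rw [← h] at hcQξ
      simp at hcQξ
  have hPle : ∏ k ∈ Finset.range (N-1), qtrans p E (ξ k) (ξ (k+1)) ≤
      ∏ k ∈ Finset.range (N-1), qtrans p E (η k) (η (k+1)) := by
    have h1 : mdist p E (ξ 0) * ∏ k ∈ Finset.range (N-1), qtrans p E (ξ k) (ξ (k+1)) ≤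
        mdist p E (ξ 0) * ∏ k ∈ Finset.range (N-1), qtrans p E (η k) (η (k+1)) := by
      have h2 := hcQle
      unfold cylProbQ at h2
      rwa [← h0] at h2
    exact le_of_mul_le_mul_left h1 hm0pos
  -- ξ and η differ as tuples
  have hne : ¬ (∀ k < N, η k = ξ k) := by
    intro hkeq
    have himeq : ∀ y, itf a b (fseq a b g f) η N y = itf a b (fseq a b g f) ξ N y :=
      Stmt14Aux.itf_congr a b (fseq a b g f) η ξ N hkeq
    have hx0 : (a : ℝ) ∈ Set.Icc a b := Set.left_mem_Icc.2 hab.le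
    have hmem : itf a b (fseq a b g f) ξ N ⟨a, hx0⟩ ∈
        (itf a b (fseq a b g f) ξ N '' Set.univ) ∩ (itf a b (fseq a b g f) η N '' Set.univ) :=
      ⟨⟨_, Set.mem_univ _, rfl⟩, ⟨⟨a, hx0⟩, Set.mem_univ _, himeq _⟩⟩
    rw [hdisj] at hmem
    exact hmem
  have blocklt : ∀ i < n, ∀ k < N, i*N+k < n*N := by
    intro i hi k hk
    calc i*N+k < i*N+N := by omega
    _ = (i+1)*N := by ring
    _ ≤ n*N := Nat.mul_le_mul_right N (by omega)
  -- word predicates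
  set ΦA : (Fin (n*N) → ℕ) → Prop :=
    fun w => x ∈ itf a b (fseq a b g f) (padSeq w) (n*N) '' Set.univ with hΦA
  set ΦB : (Fin (n*N) → ℕ) → Prop :=
    fun w => ∀ i < n, ¬ (∀ k < N, padSeq w (i*N+k) = ξ k) with hΦB
  have hpadres : ∀ ω : ℕ → ℕ, ∀ i < n*N, padSeq (fun j : Fin (n*N) => ω j.1) i = ω i := by
    intro ω i hi; simp [padSeq, hi]
  have hSnX : SnX a b (fseq a b g f) x (n*N) = {ω | ΦA (fun i => ω i.1)} := by
    ext ω
    show (x ∈ itf a b (fseq a b g f) ω (n*N) '' Set.univ) ↔ _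
    have hfe : itf a b (fseq a b g f) (padSeq fun j : Fin (n*N) => ω j.1) (n*N) =
        itf a b (fseq a b g f) ω (n*N) :=
      funext (Stmt14Aux.itf_congr a b (fseq a b g f) _ ω (n*N) (hpadres ω))
    show _ ↔ x ∈ itf a b (fseq a b g f) (padSeq fun j : Fin (n*N) => ω j.1) (n*N) '' Set.univ
    rw [hfe]
  have hSigW : SigW ξ N n = {ω | ΦB (fun i => ω i.1)} := by
    ext ω
    show (∀ i < n, ¬ (∀ k < N, ω (i*N+k) = ξ k)) ↔
        (∀ i < n, ¬ (∀ k < N, padSeq (fun j : Fin (n*N) => ω j.1) (i*N+k) = ξ k))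
    refine forall₂_congr fun i hi => not_congr (forall₂_congr fun k hk => ?_)
    rw [hpadres ω _ (blocklt i hi k hk)]
  -- the block-substitution map on words
  set hmapw : (Fin (n*N) → ℕ) → (Fin (n*N) → ℕ) :=
    fun w i => Hn ξ η N (padSeq w) i.1 with hhmapw
  have hpadmap : ∀ w : Fin (n*N) → ℕ, ∀ i < n*N,
      padSeq (hmapw w) i = Hn ξ η N (padSeq w) i := by
    intro w i hi; simp [padSeq, hi, hhmapw]
  have hmapB : ∀ w, ΦB (hmapw w) := by
    intro w i hi hall
    by_cases hC : ∀ l < N, padSeq w (i*N+l) = ξ l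
    · apply hne
      intro k hk
      have h1 := hall k hk
      rwa [hpadmap w _ (blocklt i hi k hk), Stmt14Aux.Hn_block ξ η N hN _ i k hk,
        if_pos hC] at h1
    · apply hC
      intro l hl
      have h1 := hall l hl
      rwa [hpadmap w _ (blocklt i hi l hl), Stmt14Aux.Hn_block ξ η N hN _ i l hl,
        if_neg hC] at h1
  have hνmono : ∀ w : Fin (n*N) → ℕ,
      Pm (cyl (padSeq w) (n*N)) ≤ Pm (cyl (padSeq (hmapw w)) (n*N)) := by
    intro w
    rw [hPm (n*N) hM1, hPm (n*N) hM1]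
    apply ENNReal.ofReal_le_ofReal
    refine Stmt14Aux.key_prod p E hq hm N hN ξ η h0 hN1 hPle n hn
      (padSeq w) (padSeq (hmapw w)) ?_
    intro j hj
    by_cases hC : ∀ l < N, padSeq w (j*N+l) = ξ l
    · right
      refine ⟨hC, fun k hk => ?_⟩
      rw [hpadmap w _ (blocklt j hj k hk), Stmt14Aux.Hn_block ξ η N hN _ j k hk, if_pos hC]
    · left
      intro k hk
      rw [hpadmap w _ (blocklt j hj k hk), Stmt14Aux.Hn_block ξ η N hN _ j k hk, if_neg hC]
  set e : {w : Fin (n*N) → ℕ // ΦA w} → {w : Fin (n*N) → ℕ // ΦB w} :=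
    fun wA => ⟨hmapw wA.1, hmapB wA.1⟩ with he
  have einj : Function.Injective e := by
    intro w1 w2 h
    have h' : hmapw w1.1 = hmapw w2.1 := congrArg Subtype.val h
    apply Subtype.ext
    refine Stmt14Aux.hmap_inj a b f g hfi hgi N hN ξ η hdisj n x w1.1 w2.1 w1.2 w2.2 ?_
    intro i hi
    exact congrFun h' ⟨i, hi⟩
  rw [hSnX, hSigW, Stmt14Aux.measure_cylword Pm (n*N) ΦA,
    Stmt14Aux.measure_cylword Pm (n*N) ΦB]
  calc ∑' wA : {w : Fin (n*N) → ℕ // ΦA w}, Pm (cyl (padSeq wA.1) (n*N))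
      ≤ ∑' wA : {w : Fin (n*N) → ℕ // ΦA w}, Pm (cyl (padSeq ((e wA).1)) (n*N)) :=
        ENNReal.tsum_le_tsum fun wA => hνmono wA.1
    _ ≤ ∑' wB : {w : Fin (n*N) → ℕ // ΦB w}, Pm (cyl (padSeq wB.1) (n*N)) :=
        ENNReal.tsum_comp_le_tsum_of_injective einj
          (fun wB => Pm (cyl (padSeq wB.1) (n*N)))

end
end

section
/- Claim: Assume f and g are injective. Let (ξ₀,…,ξ_{N-1}) and (η₀,…,η_{N-1}) be finite sequences in ℕ₀ with (f_{ξ₀}∘⋯∘f_{ξ_{N-1}})(I) ∩ (f_{η₀}∘⋯∘f_{η_{N-1}})(I) = ∅, and for n ≥ 1 define H_n on sequences a = (a₀,…,a_{nN-1}) ∈ ℕ₀^{nN} by replacing each block (a_{iN},…,a_{(i+1)N-1}) that equals (ξ₀,…,ξ_{N-1}) by (η₀,…,η_{N-1}) and leaving all other blocks unchanged. Then for every x ∈ I, H_n is injective on the set {a ∈ ℕ₀^{nN} : x ∈ (f_{a₀}∘⋯∘f_{a_{nN-1}})(I)}: if a and a' both belong to this set and H_n(a) = H_n(a'), then a = a'.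 -/
open MeasureTheory Filter Topology Set
open scoped BigOperators

noncomputable section

lemma itf_congr' (a b : ℝ) (fI : ℕ → Set.Icc a b → Set.Icc a b) (ξ ξ' : ℕ → ℕ) (n : ℕ)
    (h : ∀ i < n, ξ i = ξ' i) : itf a b fI ξ n = itf a b fI ξ' n := by
  induction n with
  | zero => rfl
  | succ n ih =>
    funext x
    show itf a b fI ξ n (fI (ξ n) x) = itf a b fI ξ' n (fI (ξ' n) x)
    rw [ih (fun i hi => h i (Nat.lt_succ_of_lt hi)), h n (Nat.lt_succ_self n)]

lemma itf_add' (a b : ℝ) (fI : ℕ → Set.Icc a b → Set.Icc a b) (ξ : ℕ → ℕ) (m p : ℕ) :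
    itf a b fI ξ (m + p) = itf a b fI ξ m ∘ itf a b fI (fun i => ξ (m + i)) p := by
  induction p with
  | zero => rfl
  | succ p ih =>
    funext x
    show itf a b fI ξ (m + p) (fI (ξ (m + p)) x) = _
    rw [ih]
    rfl

lemma itf_inj' (a b : ℝ) (fI : ℕ → Set.Icc a b → Set.Icc a b)
    (hinj : ∀ k, Function.Injective (fI k)) (ξ : ℕ → ℕ) (n : ℕ) :
    Function.Injective (itf a b fI ξ n) := by
  induction n with
  | zero => exact fun x y h => h
  | succ n ih => exact fun x y hxy => hinj (ξ n) (ih hxy)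

lemma badBlock (a b : ℝ) (fI : ℕ → Set.Icc a b → Set.Icc a b)
    (hinj : ∀ k, Function.Injective (fI k))
    (n N j : ℕ) (hj : j < n) (ξ η : ℕ → ℕ)
    (hdisj : (itf a b fI ξ N '' Set.univ) ∩ (itf a b fI η N '' Set.univ) = ∅)
    (x : Set.Icc a b) (c c' : ℕ → ℕ)
    (hx : x ∈ itf a b fI c (n * N) '' Set.univ)
    (hx' : x ∈ itf a b fI c' (n * N) '' Set.univ)
    (hpre : ∀ i < j * N, c i = c' i)
    (hc : ∀ k < N, c (j * N + k) = ξ k)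
    (hc' : ∀ k < N, c' (j * N + k) = η k) : False := by
  obtain ⟨m, rfl⟩ : ∃ m, n = j + m + 1 := ⟨n - j - 1, by omega⟩
  have harith : (j + m + 1) * N = j * N + (N + m * N) := by ring
  have hdec : ∀ (d ζ : ℕ → ℕ), (∀ k < N, d (j * N + k) = ζ k) →
      ∀ y : Set.Icc a b, itf a b fI d ((j + m + 1) * N) y ∈
        itf a b fI d (j * N) '' (itf a b fI ζ N '' Set.univ) := by
    intro d ζ hd y
    have h1 := itf_add' a b fI d (j * N) (N + m * N)
    have h2 := itf_add' a b fI (fun i => d (j * N + i)) N (m * N)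
    have h3 : itf a b fI (fun i => d (j * N + i)) N = itf a b fI ζ N :=
      itf_congr' a b fI _ _ N (fun i hi => hd i hi)
    rw [harith, h1]
    refine ⟨itf a b fI (fun i => d (j * N + i)) (N + m * N) y, ?_, rfl⟩
    rw [h2, ← h3]
    exact ⟨_, trivial, rfl⟩
  obtain ⟨y, -, hy⟩ := hx
  obtain ⟨y', -, hy'⟩ := hx'
  have hz := hdec c ξ hc y
  rw [hy] at hz
  have hz' := hdec c' η hc' y'
  rw [hy'] at hz'
  have hFeq : itf a b fI c' (j * N) = itf a b fI c (j * N) :=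
    itf_congr' a b fI _ _ _ (fun i hi => (hpre i hi).symm)
  rw [hFeq] at hz'
  obtain ⟨z, hzmem, hzx⟩ := hz
  obtain ⟨z', hzmem', hzx'⟩ := hz'
  have hzz : z = z' := itf_inj' a b fI hinj c (j * N) (hzx.trans hzx'.symm)
  subst hzz
  have : z ∈ (itf a b fI ξ N '' Set.univ) ∩ (itf a b fI η N '' Set.univ) := ⟨hzmem, hzmem'⟩
  rw [hdisj] at this
  exact this

/-- Lemma 3.3: H_n is injective on the set of length-nN sequences whose
associated composition image contains x. -/
theorem stmt16 (a b : ℝ) (hab : a < b)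
    (f g : Set.Icc a b → Set.Icc a b) (hfc : Continuous f) (hgc : Continuous g)
    (hfi : Function.Injective f) (hgi : Function.Injective g)
    (N : ℕ) (hN : 1 ≤ N) (n : ℕ) (hn : 1 ≤ n) (ξ η : ℕ → ℕ)
    (hdisj : (itf a b (fseq a b g f) ξ N '' Set.univ) ∩
        (itf a b (fseq a b g f) η N '' Set.univ) = ∅)
    (x : Set.Icc a b) (c c' : ℕ → ℕ)
    (hx : x ∈ itf a b (fseq a b g f) c (n * N) '' Set.univ)
    (hx' : x ∈ itf a b (fseq a b g f) c' (n * N) '' Set.univ)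
    (hH : ∀ i < n * N, Hn ξ η N c i = Hn ξ η N c' i) :
    ∀ i < n * N, c i = c' i := by
  have hNpos : 0 < N := hN
  have hinj : ∀ k, Function.Injective (fseq a b g f k) := by
    intro k
    by_cases h : k = 0
    · simpa [fseq, h] using hgi
    · simpa [fseq, h] using hfi
  have key : ∀ j, j < n → ∀ k < N, c (j * N + k) = c' (j * N + k) := by
    intro j
    induction j using Nat.strong_induction_on with
    | _ j IH =>
      intro hj k hk
      have hpre : ∀ i < j * N, c i = c' i := by
        intro i hi
        have h1 : i / N < j := (Nat.div_lt_iff_lt_mul hNpos).mpr hi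
        have h2 : i / N * N + i % N = i := Nat.div_add_mod' i N
        have h3 : i % N < N := Nat.mod_lt _ hNpos
        have := IH (i / N) h1 (h1.trans hj) (i % N) h3
        rwa [h2] at this
      have hlt : ∀ k', k' < N → j * N + k' < n * N := by
        intro k' hk'
        have h1 : (j + 1) * N ≤ n * N := Nat.mul_le_mul hj le_rfl
        have h2 : j * N + k' < (j + 1) * N := by
          rw [add_mul, one_mul]; exact Nat.add_lt_add_left hk' _
        exact lt_of_lt_of_le h2 h1
      have hdiv : ∀ k', k' < N → (j * N + k') / N = j := by
        intro k' hk'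
        rw [Nat.add_comm, Nat.add_mul_div_right _ _ hNpos, Nat.div_eq_of_lt hk', Nat.zero_add]
      have hmod : ∀ k', k' < N → (j * N + k') % N = k' := by
        intro k' hk'
        rw [Nat.add_comm, Nat.add_mul_mod_self_right, Nat.mod_eq_of_lt hk']
      have hHc : ∀ (d : ℕ → ℕ) (k' : ℕ), k' < N →
          Hn ξ η N d (j * N + k') =
            if (∀ k'' < N, d (j * N + k'') = ξ k'') then η k' else d (j * N + k') := by
        intro d k' hk'
        simp only [Hn, hdiv k' hk', hmod k' hk']
      by_cases hPc : ∀ k'' < N, c (j * N + k'') = ξ k''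
      · by_cases hPc' : ∀ k'' < N, c' (j * N + k'') = ξ k''
        · rw [hPc k hk, hPc' k hk]
        · have hc' : ∀ k' < N, c' (j * N + k') = η k' := by
            intro k' hk'
            have := hH (j * N + k') (hlt k' hk')
            rw [hHc c k' hk', hHc c' k' hk', if_pos hPc, if_neg hPc'] at this
            exact this.symm
          exact absurd (badBlock a b (fseq a b g f) hinj n N j hj ξ η hdisj x c c'
            hx hx' hpre hPc hc') (fun h => h.elim)
      · by_cases hPc' : ∀ k'' < N, c' (j * N + k'') = ξ k''
        · have hc2 : ∀ k' < N, c (j * N + k') = η k' := by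
            intro k' hk'
            have := hH (j * N + k') (hlt k' hk')
            rw [hHc c k' hk', hHc c' k' hk', if_neg hPc, if_pos hPc'] at this
            exact this
          have hdisj' : (itf a b (fseq a b g f) η N '' Set.univ) ∩
              (itf a b (fseq a b g f) ξ N '' Set.univ) = ∅ := by
            rw [Set.inter_comm]; exact hdisj
          exact absurd (badBlock a b (fseq a b g f) hinj n N j hj η ξ hdisj' x c c'
            hx hx' hpre hc2 hPc') (fun h => h.elim)
        · have := hH (j * N + k) (hlt k hk)
          rwa [hHc c k hk, hHc c' k hk, if_neg hPc, if_neg hPc'] at this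
  intro i hi
  have h1 : i / N < n := (Nat.div_lt_iff_lt_mul hNpos).mpr hi
  have h2 : i / N * N + i % N = i := Nat.div_add_mod' i N
  have := key (i / N) h1 (i % N) (Nat.mod_lt _ hNpos)
  rwa [h2] at this

end
end

section
/- Claim: Suppose f and g are continuous and monotone, and there exist a, b ∈ I such that for every x ∈ I, fⁿ(x) → a and gⁿ(x) → b as n → ∞ (so a and b are the unique attracting fixed points of f and g), and g(a) ≠ b. Then there exists n ∈ ℕ such that gⁿ(I) ∩ g(fⁿ(I)) = ∅, and consequently the splitting condition is satisfied (with the sequences a₁ = ⋯ = a_n = 0 and b₁ = n, b₂ = n-1, …, b_n = 1, b_{n+1} = 0). -/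
open MeasureTheory Filter Topology Set
open scoped BigOperators

noncomputable section

lemma realBound (u v x B : ℝ) (h1 : min u v ≤ x) (h2 : x ≤ max u v) :
    |x - B| ≤ max |u - B| |v - B| := by
  rcases le_total u v with h | h
  · rw [min_eq_left h] at h1
    rw [max_eq_right h] at h2
    rw [abs_sub_le_iff]
    refine ⟨?_, ?_⟩
    · calc x - B ≤ v - B := by linarith
        _ ≤ |v - B| := le_abs_self _
        _ ≤ _ := le_max_right _ _
    · calc B - x ≤ -(u - B) := by linarith
        _ ≤ |u - B| := neg_le_abs _
        _ ≤ _ := le_max_left _ _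
  · rw [min_eq_right h] at h1
    rw [max_eq_left h] at h2
    rw [abs_sub_le_iff]
    refine ⟨?_, ?_⟩
    · calc x - B ≤ u - B := by linarith
        _ ≤ |u - B| := le_abs_self _
        _ ≤ _ := le_max_left _ _
    · calc B - x ≤ -(v - B) := by linarith
        _ ≤ |v - B| := neg_le_abs _
        _ ≤ _ := le_max_right _ _

lemma monoAntiIter {α : Type*} [Preorder α] {f : α → α} (h : Monotone f ∨ Antitone f) :
    ∀ n, Monotone f^[n] ∨ Antitone f^[n] := by
  intro n
  induction n with
  | zero => exact Or.inl monotone_id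
  | succ n ih =>
    rw [Function.iterate_succ]
    rcases ih with ih | ih <;> rcases h with h' | h'
    · exact Or.inl (ih.comp h')
    · exact Or.inr (ih.comp_antitone h')
    · exact Or.inr (ih.comp_monotone h')
    · exact Or.inl (ih.comp h')

/-- Claim 6: if f and g are continuous and monotone with unique
attracting fixed points A, B respectively and g(A) ≠ B, then gⁿ(I) ∩ g(fⁿ(I)) = ∅ for
some n and the splitting condition is satisfied. -/
theorem stmt17 (a b : ℝ) (hab : a < b)
    (f g : Set.Icc a b → Set.Icc a b) (hfc : Continuous f) (hgc : Continuous g)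
    (hfm : Monotone f ∨ Antitone f) (hgm : Monotone g ∨ Antitone g)
    (A B : Set.Icc a b)
    (hA : ∀ x : Set.Icc a b, Tendsto (fun n => f^[n] x) atTop (𝓝 A))
    (hB : ∀ x : Set.Icc a b, Tendsto (fun n => g^[n] x) atTop (𝓝 B))
    (hAB : g A ≠ B)
    (p : ℕ → ℝ) (E : ℝ)
    (hp : ∀ n, 0 ≤ p n) (hp1 : HasSum p 1) (hp0 : 0 < p 0)
    (hmean : Summable fun n : ℕ => (n : ℝ) * p n)
    (hE : E = ∑' n : ℕ, (n : ℝ) * p n)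
    (hsupp : ∀ N : ℕ, ∃ n, N ≤ n ∧ 0 < p n)
    (Pp : Measure (ℕ → ℕ)) [IsProbabilityMeasure Pp]
    (hPp : ∀ n, 1 ≤ n → ∀ ξ : ℕ → ℕ, Pp (cyl ξ n) = ENNReal.ofReal (cylProbP p E ξ n)) :
    (∃ n : ℕ, 1 ≤ n ∧
        (g^[n] '' Set.univ) ∩ ((fun x => g (f^[n] x)) '' Set.univ) = ∅) ∧
      Splitting a b (fseq a b g f) Pp := by
  set lo : Set.Icc a b := ⟨a, Set.left_mem_Icc.mpr hab.le⟩ with hlo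
  set hi : Set.Icc a b := ⟨b, Set.right_mem_Icc.mpr hab.le⟩ with hhi
  -- uniform bound for monotone/antitone maps
  have bound : ∀ F : Set.Icc a b → Set.Icc a b, (Monotone F ∨ Antitone F) →
      ∀ C x : Set.Icc a b, dist (F x) C ≤ max (dist (F lo) C) (dist (F hi) C) := by
    intro F hF C x
    have hx1 : lo ≤ x := Subtype.coe_le_coe.mp x.2.1
    have hx2 : x ≤ hi := Subtype.coe_le_coe.mp x.2.2
    simp only [Subtype.dist_eq, Real.dist_eq]
    rcases hF with hF | hF
    · exact realBound _ _ _ _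
        ((min_le_left _ _).trans (Subtype.coe_le_coe.mpr (hF hx1)))
        ((Subtype.coe_le_coe.mpr (hF hx2)).trans (le_max_right _ _))
    · exact realBound _ _ _ _
        ((min_le_right _ _).trans (Subtype.coe_le_coe.mpr (hF hx2)))
        ((Subtype.coe_le_coe.mpr (hF hx1)).trans (le_max_left _ _))
  have hd : 0 < dist (g A) B := dist_pos.mpr hAB
  set ε : ℝ := dist (g A) B / 3 with hεdef
  have hεpos : 0 < ε := by positivity
  obtain ⟨δ, hδ, hgd⟩ := Metric.continuous_iff.mp hgc A ε hεpos
  obtain ⟨N1, hN1⟩ := Metric.tendsto_atTop.mp (hB lo) ε hεpos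
  obtain ⟨N2, hN2⟩ := Metric.tendsto_atTop.mp (hB hi) ε hεpos
  obtain ⟨N3, hN3⟩ := Metric.tendsto_atTop.mp (hA lo) δ hδ
  obtain ⟨N4, hN4⟩ := Metric.tendsto_atTop.mp (hA hi) δ hδ
  set n : ℕ := N1 + N2 + N3 + N4 + 1 with hndef
  have hn1 : 1 ≤ n := by omega
  have hgn : ∀ x, dist (g^[n] x) B < ε := by
    intro x
    refine lt_of_le_of_lt (bound _ (monoAntiIter hgm n) B x) ?_
    exact max_lt (hN1 n (by omega)) (hN2 n (by omega))
  have hfn : ∀ x, dist (f^[n] x) A < δ := by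
    intro x
    refine lt_of_le_of_lt (bound _ (monoAntiIter hfm n) A x) ?_
    exact max_lt (hN3 n (by omega)) (hN4 n (by omega))
  have hempty : (g^[n] '' Set.univ) ∩ ((fun x => g (f^[n] x)) '' Set.univ) = ∅ := by
    ext y
    simp only [Set.mem_inter_iff, Set.mem_image, Set.mem_empty_iff_false, iff_false]
    rintro ⟨⟨x1, -, rfl⟩, ⟨x2, -, hy2⟩⟩
    have h1 : dist (g^[n] x1) B < ε := hgn x1
    have h2 : dist (g (f^[n] x2)) (g A) < ε := hgd _ (hfn x2)
    have h4 : dist (g (f^[n] x2)) B = dist (g^[n] x1) B := by rw [hy2]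
    have h5 := dist_triangle (g A) (g (f^[n] x2)) B
    rw [dist_comm (g A) (g (f^[n] x2)), h4] at h5
    linarith
  refine ⟨⟨n, hn1, hempty⟩, ?_⟩
  -- splitting condition
  have hE0 : 0 ≤ E := hE ▸ tsum_nonneg fun i => mul_nonneg (Nat.cast_nonneg i) (hp i)
  have h1E : 0 < 1 + E := by linarith
  have ht0 : tailSum p 0 = 1 := by
    simp only [tailSum, zero_add]
    exact hp1.tsum_eq
  have hcpos : 0 < cylProbP p E (fun _ => 0) n := by
    unfold cylProbP
    apply mul_pos
    · unfold mdist
      rw [ht0]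
      positivity
    · rw [Finset.prod_congr rfl fun i _ => show Ptrans p 0 0 = p 0 by simp [Ptrans],
        Finset.prod_const, Finset.card_range]
      exact pow_pos hp0 _
  obtain ⟨m, hmn, hpm⟩ := hsupp n
  have hsum_shift : Summable fun j => p (n + j) :=
    ((summable_nat_add_iff n).mpr hp1.summable).congr fun j => by rw [add_comm]
  have htpos : 0 < tailSum p n := by
    unfold tailSum
    have hpmn : 0 < p (n + (m - n)) := by rwa [Nat.add_sub_cancel' hmn]
    exact Summable.tsum_pos hsum_shift (fun j => hp _) (m - n) hpmn
  have hdpos : 0 < cylProbP p E (fun i => n - i) (n + 1) := by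
    unfold cylProbP
    apply mul_pos
    · unfold mdist
      simp only [Nat.sub_zero]
      exact div_pos htpos h1E
    · rw [Nat.add_sub_cancel,
        Finset.prod_congr rfl fun i hi =>
          show Ptrans p (n - i) (n - (i + 1)) = 1 by
            have hi' : i < n := Finset.mem_range.mp hi
            unfold Ptrans
            rw [if_neg (by omega), if_pos (by omega)],
        Finset.prod_const_one]
      exact one_pos
  have itc : ∀ k, itfRev a b (fseq a b g f) (fun _ => 0) k = g^[k] := by
    intro k
    induction k with
    | zero => rfl
    | succ k ih =>
      funext x
      show fseq a b g f 0 (itfRev a b (fseq a b g f) (fun _ => 0) k x) = g^[k + 1] x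
      rw [ih, Function.iterate_succ_apply']
      rfl
  have itdk : ∀ k, k ≤ n → itfRev a b (fseq a b g f) (fun i => n - i) k = f^[k] := by
    intro k
    induction k with
    | zero => intro _; rfl
    | succ k ih =>
      intro hk1
      funext x
      show fseq a b g f (n - k)
          (itfRev a b (fseq a b g f) (fun i => n - i) k x) = f^[k + 1] x
      rw [ih (by omega), Function.iterate_succ_apply']
      unfold fseq
      rw [if_neg (by omega)]
  have itd : itfRev a b (fseq a b g f) (fun i => n - i) (n + 1) =
      fun x => g (f^[n] x) := by
    funext x
    show fseq a b g f (n - n)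
        (itfRev a b (fseq a b g f) (fun i => n - i) n x) = g (f^[n] x)
    rw [itdk n le_rfl, Nat.sub_self]
    rfl
  refine ⟨n, n + 1, (fun _ => 0), (fun i => n - i), hn1, by omega, ?_, ?_, ?_, ?_⟩
  · rw [hPp n hn1]
    exact ENNReal.ofReal_pos.mpr hcpos
  · rw [hPp (n + 1) (by omega)]
    exact ENNReal.ofReal_pos.mpr hdpos
  · simp
  · rw [itc, itd]
    exact hempty

end
end

section
/- Claim: Let p ∈ (0,1) and p_k := (1-p)·p^k for k ∈ ℕ₀ (the geometric distribution, which has p₀ > 0, finite mean and unbounded support). Let ℙ* be the unique probability measure on Σ with ℙ*([ξ₀,…,ξ_{n-1}]) = p_{ξ₀}·p_{ξ₀ξ₁}·⋯·p_{ξ_{n-2}ξ_{n-1}} for every cylinder, and for ω ∈ Σ and k ∈ ℕ₀ set F*_k(ω) := 0 if ω_k = 0 and F*_k(ω) := 1 if ω_k ≥ 1. Then for every n ≥ 1 and every (j₀,…,j_{n-1}) ∈ {0,1}ⁿ, ℙ*({ω ∈ Σ : F*_k(ω) = j_k for all k < n}) = p^{∑_{k<n} j_k}·(1-p)^{n − ∑_{k<n}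 j_k}. -/
open MeasureTheory Filter Topology Set
open scoped BigOperators

noncomputable section

/-!
Started from the geometric law, the chain shows `F* = 0` with probability `1 - p` and then jumps
to a fresh geometric state; it shows `F* = 1` with probability `p` and then moves to the state
`ω₀ - 1`, which by memorylessness is again geometric. So after each step the chain is back in its
initial law whatever value of `F*` was observed, and pattern probabilities factorise.
-/

open scoped ENNReal

lemma Ptrans_zero_left (q : ℕ → ℝ) (j : ℕ) : Ptrans q 0 j = q j := by
  simp [Ptrans]

lemma Ptrans_succ_left (q : ℕ → ℝ) (i j : ℕ) :
    Ptrans q (i + 1) j = if j = i then 1 else 0 := by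
  simp [Ptrans, eq_comm]

lemma Ptrans_nonneg {q : ℕ → ℝ} (hq : ∀ k, 0 ≤ q k) (i j : ℕ) : 0 ≤ Ptrans q i j := by
  unfold Ptrans
  split_ifs <;> simp [hq]

lemma tsum_ofReal_Ptrans_succ_mul (q : ℕ → ℝ) (i : ℕ) (F : ℕ → ℝ≥0∞) :
    ∑' j, ENNReal.ofReal (Ptrans q (i + 1) j) * F j = F i := by
  rw [tsum_eq_single i fun j hj => by simp [Ptrans_succ_left, hj]]
  simp [Ptrans_succ_left]

lemma measurableSet_cyl (ξ : ℕ → ℕ) (n : ℕ) : MeasurableSet (cyl ξ n) := by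
  simp only [cyl, Set.ofPred_forall]
  exact .iInter fun i => .iInter fun _ =>
    measurableSet_eq_fun (measurable_pi_apply i) measurable_const

lemma cyl_zero (ξ : ℕ → ℕ) : cyl ξ 0 = univ := by
  simp [cyl]

lemma cyl_eq_iUnion_cyl_update (ξ : ℕ → ℕ) (n : ℕ) :
    cyl ξ n = ⋃ m, cyl (Function.update ξ n m) (n + 1) := by
  ext ω
  simp only [cyl, mem_ofPred_eq, mem_iUnion, Nat.forall_lt_succ_right]
  refine ⟨fun h => ⟨ω n, fun i hi => ?_, by simp⟩, fun ⟨m, h, _⟩ i hi => ?_⟩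
  · rw [Function.update_of_ne hi.ne, h i hi]
  · rw [h i hi, Function.update_of_ne hi.ne]

lemma pairwise_disjoint_cyl_update (ξ : ℕ → ℕ) (n : ℕ) :
    Pairwise (Function.onFun Disjoint fun m => cyl (Function.update ξ n m) (n + 1)) := by
  refine fun m m' hm => Set.disjoint_left.mpr fun ω h h' => hm ?_
  simpa using (h n n.lt_succ_self).symm.trans (h' n n.lt_succ_self)

lemma measure_cyl_inter_eq_tsum (μ : Measure (ℕ → ℕ)) (ξ : ℕ → ℕ) (n : ℕ)
    {S : Set (ℕ → ℕ)} (hS : MeasurableSet S) :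
    μ (cyl ξ n ∩ S) = ∑' m, μ (cyl (Function.update ξ n m) (n + 1) ∩ S) := by
  rw [cyl_eq_iUnion_cyl_update, iUnion_inter]
  exact measure_iUnion (fun m m' hm => ((pairwise_disjoint_cyl_update ξ n hm).mono
    inter_subset_left inter_subset_left)) fun m => (measurableSet_cyl _ _).inter hS

def IsMarkovMeasure (μ : Measure (ℕ → ℕ)) (π : ℕ → ℝ) (T : ℕ → ℕ → ℝ) : Prop :=
  ∀ n, 1 ≤ n → ∀ ξ : ℕ → ℕ,
    μ (cyl ξ n) =
      ENNReal.ofReal (π (ξ 0) * ∏ i ∈ Finset.range (n - 1), T (ξ i) (ξ (i + 1)))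

lemma IsMarkovMeasure.measure_cyl_update {μ : Measure (ℕ → ℕ)} {π : ℕ → ℝ} {T : ℕ → ℕ → ℝ}
    (hμ : IsMarkovMeasure μ π T) (hT : ∀ i i', 0 ≤ T i i')
    (ξ : ℕ → ℕ) (n m : ℕ) :
    μ (cyl (Function.update ξ (n + 1) m) (n + 2)) =
      μ (cyl ξ (n + 1)) * ENNReal.ofReal (T (ξ n) m) := by
  have hξ : ∀ i ≤ n, Function.update ξ (n + 1) m i = ξ i := fun i hi =>
    Function.update_of_ne (by omega) _ _
  rw [hμ _ (by omega), hμ _ (by omega), ← ENNReal.ofReal_mul' (hT _ _),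
    show n + 2 - 1 = n + 1 by omega, Nat.add_sub_cancel, Finset.prod_range_succ,
    hξ 0 n.zero_le, hξ n le_rfl, Function.update_self, Finset.prod_congr rfl fun i hi => by
      rw [hξ i (by simp at hi; omega), hξ (i + 1) (by simp at hi; omega)], mul_assoc]

section Pattern

variable {α : Type*} (f : ℕ → α)

def patternSet (j : ℕ → α) (n r : ℕ) : Set (ℕ → ℕ) :=
  {ω | ∀ k < r, f (ω (n + k)) = j k}

lemma measurableSet_patternSet (j : ℕ → α) (n r : ℕ) :
    MeasurableSet (patternSet f j n r) := by
  simp only [patternSet, Set.ofPred_forall]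
  exact .iInter fun k => .iInter fun _ =>
    show MeasurableSet ((fun ω : ℕ → ℕ => ω (n + k)) ⁻¹' (f ⁻¹' {j k})) from
      measurable_pi_apply (n + k) .of_discrete

lemma patternSet_succ (j : ℕ → α) (n r : ℕ) :
    patternSet f j n (r + 1) =
      {ω | f (ω n) = j 0} ∩ patternSet f (fun k => j (k + 1)) (n + 1) r := by
  ext ω
  simp only [patternSet, mem_ofPred_eq, mem_inter_iff, Nat.forall_lt_succ_left, add_zero]
  simp only [add_assoc, add_comm 1]

variable [DecidableEq α]

def patternProb (T : ℕ → ℕ → ℝ) : ℕ → (ℕ → α) → ℕ → ℝ≥0∞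
  | 0, _, _ => 1
  | r + 1, j, m =>
    if f m = j 0 then ∑' m', ENNReal.ofReal (T m m') * patternProb T r (fun k => j (k + 1)) m'
    else 0

variable {μ : Measure (ℕ → ℕ)} {π : ℕ → ℝ} {T : ℕ → ℕ → ℝ}

lemma IsMarkovMeasure.measure_cyl_inter_patternSet (hμ : IsMarkovMeasure μ π T)
    (hT : ∀ i i', 0 ≤ T i i') (r : ℕ) (j : ℕ → α) (ξ : ℕ → ℕ) (n : ℕ) :
    μ (cyl ξ (n + 1) ∩ patternSet f j n r) =
      μ (cyl ξ (n + 1)) * patternProb f T r j (ξ n) := by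
  induction r generalizing j ξ n with
  | zero => simp [patternSet, patternProb]
  | succ r ih =>
    by_cases hj : f (ξ n) = j 0
    · have hcyl : cyl ξ (n + 1) ∩ patternSet f j n (r + 1) =
          cyl ξ (n + 1) ∩ patternSet f (fun k => j (k + 1)) (n + 1) r := by
        rw [patternSet_succ, ← inter_assoc]
        exact congrArg (· ∩ _) <|
          inter_eq_left.mpr fun ω hω => by simp [hω n n.lt_succ_self, hj]
      rw [hcyl, measure_cyl_inter_eq_tsum _ _ _ (measurableSet_patternSet _ _ _ _)]
      simp only [ih, hμ.measure_cyl_update hT, Function.update_self, patternProb, hj, if_true,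
        ← ENNReal.tsum_mul_left, mul_assoc]
    · have hcyl : cyl ξ (n + 1) ∩ patternSet f j n (r + 1) = ∅ := by
        refine eq_empty_of_forall_notMem fun ω ⟨hω, hpat⟩ => hj ?_
        simpa [hω n n.lt_succ_self] using hpat 0 r.succ_pos
      simp [hcyl, patternProb, hj]

lemma IsMarkovMeasure.measure_patternSet_zero (hμ : IsMarkovMeasure μ π T)
    (hT : ∀ i i', 0 ≤ T i i') (r : ℕ) (j : ℕ → α) :
    μ (patternSet f j 0 r) = ∑' m, ENNReal.ofReal (π m) * patternProb f T r j m := by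
  rw [← univ_inter (patternSet f j 0 r), ← cyl_zero 0,
    measure_cyl_inter_eq_tsum _ _ _ (measurableSet_patternSet _ _ _ _)]
  simp [hμ.measure_cyl_inter_patternSet f hT, hμ 1 le_rfl]

end Pattern

lemma Finset.prod_pow_mul_pow_one_sub {ι M : Type*} [CommMonoid M] (s : Finset ι) (a b : M)
    (j : ι → ℕ) (hj : ∀ k ∈ s, j k ≤ 1) :
    ∏ k ∈ s, a ^ j k * b ^ (1 - j k) =
      a ^ (∑ k ∈ s, j k) * b ^ (s.card - ∑ k ∈ s, j k) := by
  rw [Finset.prod_mul_distrib, Finset.prod_pow_eq_pow_sum, Finset.prod_pow_eq_pow_sum,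
    Finset.sum_tsub_distrib _ hj, Finset.sum_const, smul_eq_mul, mul_one]

section Geometric

def geomWeight (p : ℝ) (k : ℕ) : ℝ := (1 - p) * p ^ k

variable {p : ℝ}

lemma geomWeight_nonneg (hp0 : 0 ≤ p) (hp1 : p ≤ 1) (k : ℕ) : 0 ≤ geomWeight p k :=
  mul_nonneg (sub_nonneg.2 hp1) (pow_nonneg hp0 k)

lemma ofReal_geomWeight_succ (hp0 : 0 ≤ p) (k : ℕ) :
    ENNReal.ofReal (geomWeight p (k + 1)) =
      ENNReal.ofReal p * ENNReal.ofReal (geomWeight p k) := by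
  rw [← ENNReal.ofReal_mul hp0, geomWeight, geomWeight, pow_succ]
  ring_nf

lemma tsum_ofReal_geomWeight (hp0 : 0 ≤ p) (hp1 : p < 1) :
    ∑' k, ENNReal.ofReal (geomWeight p k) = 1 := by
  have hq : 0 < 1 - p := sub_pos.2 hp1
  rw [← ENNReal.ofReal_tsum_of_nonneg (geomWeight_nonneg hp0 hp1.le)
      ((summable_geometric_of_lt_one hp0 hp1).mul_left _)]
  unfold geomWeight
  rw [tsum_mul_left, tsum_geometric_of_lt_one hp0 hp1, mul_inv_cancel₀ hq.ne', ENNReal.ofReal_one]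

variable (p) in
abbrev geomPatternProb : ℕ → (ℕ → ℕ) → ℕ → ℝ≥0∞ :=
  patternProb (fun m : ℕ => if m = 0 then 0 else 1) (Ptrans (geomWeight p))

lemma tsum_geomWeight_mul_geomPatternProb_succ (hp0 : 0 ≤ p) (r : ℕ) (j : ℕ → ℕ)
    (hj0 : j 0 ≤ 1) :
    ∑' m, ENNReal.ofReal (geomWeight p m) * geomPatternProb p (r + 1) j m =
      ENNReal.ofReal (p ^ j 0 * (1 - p) ^ (1 - j 0)) *
        ∑' m, ENNReal.ofReal (geomWeight p m) * geomPatternProb p r (fun k => j (k + 1)) m := by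
  rcases Nat.le_one_iff_eq_zero_or_eq_one.mp hj0 with h | h
  · rw [tsum_eq_single 0 fun m hm => by simp [patternProb, hm, h]]
    simp [patternProb, h, Ptrans_zero_left, geomWeight]
  · rw [tsum_eq_zero_add' ENNReal.summable]
    simp [patternProb, h, ofReal_geomWeight_succ hp0, tsum_ofReal_Ptrans_succ_mul,
      ← ENNReal.tsum_mul_left, mul_assoc]

lemma tsum_geomWeight_mul_geomPatternProb (hp0 : 0 ≤ p) (hp1 : p < 1) (r : ℕ) (j : ℕ → ℕ)
    (hj : ∀ k < r, j k ≤ 1) :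
    ∑' m, ENNReal.ofReal (geomWeight p m) * geomPatternProb p r j m =
      ENNReal.ofReal (∏ k ∈ Finset.range r, p ^ j k * (1 - p) ^ (1 - j k)) := by
  induction r generalizing j with
  | zero => simp [patternProb, tsum_ofReal_geomWeight hp0 hp1]
  | succ r ih =>
    rw [tsum_geomWeight_mul_geomPatternProb_succ hp0 r j (hj 0 r.succ_pos),
      ih _ fun k hk => hj (k + 1) (by omega), Finset.prod_range_succ', mul_comm,
      ENNReal.ofReal_mul (Finset.prod_nonneg fun k _ =>
        mul_nonneg (pow_nonneg hp0 _) (pow_nonneg (sub_nonneg.2 hp1.le) _))]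

end Geometric

theorem stmt18_general (p : ℝ) (hp0 : 0 < p) (hp1 : p < 1)
    (Pstar : Measure (ℕ → ℕ))
    (hP : ∀ n, 1 ≤ n → ∀ ξ : ℕ → ℕ,
      Pstar (cyl ξ n) = ENNReal.ofReal
        (((1 - p) * p ^ (ξ 0)) *
          ∏ i ∈ Finset.range (n - 1), Ptrans (fun k => (1 - p) * p ^ k) (ξ i) (ξ (i + 1)))) :
    ∀ n, 1 ≤ n → ∀ j : ℕ → ℕ, (∀ k < n, j k ≤ 1) →
      Pstar {ω : ℕ → ℕ | ∀ k < n, (if ω k = 0 then 0 else 1) = j k} =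
        ENNReal.ofReal (p ^ (∑ k ∈ Finset.range n, j k) *
          (1 - p) ^ (n - ∑ k ∈ Finset.range n, j k)) := by
  intro n _ j hj
  have hμ : IsMarkovMeasure Pstar (geomWeight p) (Ptrans (geomWeight p)) := hP
  have hpattern : {ω : ℕ → ℕ | ∀ k < n, (if ω k = 0 then 0 else 1) = j k} =
      patternSet (fun m : ℕ => if m = 0 then 0 else 1) j 0 n := by
    simp [patternSet]
  rw [hpattern, hμ.measure_patternSet_zero _ (Ptrans_nonneg (geomWeight_nonneg hp0.le hp1.le)),
    tsum_geomWeight_mul_geomPatternProb hp0.le hp1 n j hj,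
    Finset.prod_pow_mul_pow_one_sub _ _ _ _ fun k hk => hj k (Finset.mem_range.1 hk),
    Finset.card_range]

/-- for the geometric distribution p_k = (1-p)·pᵏ, the induced 0/1 process
F* is an i.i.d. Bernoulli sequence: the probability of any pattern (j₀,…,j_{n-1}) is
p^{∑ j_k}·(1-p)^{n-∑ j_k}. -/
theorem stmt18 (p : ℝ) (hp0 : 0 < p) (hp1 : p < 1)
    (Pstar : Measure (ℕ → ℕ)) [IsProbabilityMeasure Pstar]
    (hP : ∀ n, 1 ≤ n → ∀ ξ : ℕ → ℕ,
      Pstar (cyl ξ n) = ENNReal.ofReal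
        (((1 - p) * p ^ (ξ 0)) *
          ∏ i ∈ Finset.range (n - 1), Ptrans (fun k => (1 - p) * p ^ k) (ξ i) (ξ (i + 1)))) :
    ∀ n, 1 ≤ n → ∀ j : ℕ → ℕ, (∀ k < n, j k ≤ 1) →
      Pstar {ω : ℕ → ℕ | ∀ k < n, (if ω k = 0 then 0 else 1) = j k} =
        ENNReal.ofReal (p ^ (∑ k ∈ Finset.range n, j k) *
          (1 - p) ^ (n - ∑ k ∈ Finset.range n, j k)) :=
  stmt18_general p hp0 hp1 Pstar hP

end
end

section
/- Claim: Let ν̃ be a Borel probability measure on I satisfying ν̃(A) = ∑_{k≥0} p_k·ν̃((g∘f^k)^{-1}(A)) for every Borel set A ⊆ I (i.e. ν̃ is stationary for the iterated function system with maps g∘f^k chosen with probabilities p_k). Define a measure μ̂* on (M̂, Ŝ) by μ̂*({0}×A) := ν̃(A)/(1+E) and μ̂*({k}×A) := ∑_{j≥0} (p_{k+j}/(1+E))·ν̃((f^{j+1})^{-1}(A)) for every k ≥ 1 and every Borel set A ⊆ I. Then μ̂* is a probability measure and T μ̂* = μ̂*; equivalently, μ̂*({0}×A) = p₀·μ̂*({0}×g^{-1}(A))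 + μ̂*({1}×g^{-1}(A)) and μ̂*({k}×A) = p_k·μ̂*({0}×f^{-1}(A)) + μ̂*({k+1}×f^{-1}(A)) for all k ≥ 1 and all Borel A ⊆ I. -/
open MeasureTheory Filter Topology Set
open scoped BigOperators

noncomputable section

lemma double_tail (P : ℕ → ENNReal) : ∑' (k:ℕ), ∑' (j:ℕ), P (k+1+j) = ∑' n, n * P n := by
  have h1 : ∀ k : ℕ, ∑' j : ℕ, P (k+1+j) = ∑' n : ℕ, if k+1 ≤ n then P n else 0 := by
    intro k
    rw [← Function.Injective.tsum_eq (g := fun j => k+1+j) (fun i j h => by simpa using h)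
      (f := fun n => if k+1 ≤ n then P n else 0)]
    · simp only [Nat.le_add_right, if_pos]
    · intro n hn
      rcases le_or_gt (k+1) n with h | h
      · exact ⟨n - (k+1), by simpa using by omega⟩
      · exfalso; apply hn; simp [Nat.not_le.2 h]
  simp only [h1]
  rw [ENNReal.tsum_comm]
  congr 1
  ext n
  rw [tsum_eq_sum (s := Finset.range n) (by intro k hk; simp at hk; simp; omega)]
  have : ∀ k ∈ Finset.range n, (if k+1 ≤ n then P n else 0) = P n := by
    intro k hk
    simp at hk
    simp [Nat.succ_le_of_lt hk]
  rw [Finset.sum_congr rfl this, Finset.sum_const, Finset.card_range, nsmul_eq_mul]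

lemma slice_apply' (a b : ℝ) (μ : Measure (ℕ × Set.Icc a b)) (k : ℕ)
    (S : Set (Set.Icc a b)) (hS : MeasurableSet S) :
    sliceM a b μ k S = μ ({k} ×ˢ S) := by
  rw [sliceM, Measure.map_apply measurable_snd hS,
    Measure.restrict_apply (measurable_snd hS)]
  congr 1
  ext ⟨n, x⟩
  simp only [Set.mem_inter_iff, Set.mem_preimage, Set.mem_prod, Set.mem_singleton_iff,
    Set.mem_univ, and_true]
  tauto

lemma decomp' {α : Type*} [MeasurableSpace α] (μ : Measure (ℕ × α)) (B : Set (ℕ × α))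
    (hB : MeasurableSet B) : μ B = ∑' k : ℕ, μ ({k} ×ˢ (Prod.mk k ⁻¹' B)) := by
  have hU : B = ⋃ k : ℕ, ({k} ×ˢ (Prod.mk k ⁻¹' B)) := by
    ext ⟨n, x⟩
    simp [Set.mem_prod]
  conv_lhs => rw [hU]
  rw [measure_iUnion]
  · intro i j hij
    apply Set.disjoint_left.mpr
    rintro ⟨n, x⟩ ⟨hn, -⟩ ⟨hn', -⟩
    simp only [Set.mem_singleton_iff] at hn hn'
    exact hij (hn ▸ hn')
  · exact fun k => (measurableSet_singleton k).prod (measurable_prodMk_left hB)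


/-- Claim: if ν̃ is stationary for the IFS (g∘fᵏ, p_k), then the measure
μ̂* given by μ̂*({0}×A) = ν̃(A)/(1+E), μ̂*({k}×A) = ∑_j (p_{k+j}/(1+E))·ν̃((f^{j+1})⁻¹A)
is a T-invariant probability measure. -/
theorem stmt19 (a b : ℝ) (hab : a < b)
    (f g : Set.Icc a b → Set.Icc a b) (hfc : Continuous f) (hgc : Continuous g)
    (p : ℕ → ℝ) (E : ℝ)
    (hp : ∀ n, 0 ≤ p n) (hp1 : HasSum p 1) (hp0 : 0 < p 0)
    (hmean : Summable fun n : ℕ => (n : ℝ) * p n)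
    (hE : E = ∑' n : ℕ, (n : ℝ) * p n)
    (hsupp : ∀ N : ℕ, ∃ n, N ≤ n ∧ 0 < p n)
    (ν : Measure (Set.Icc a b)) [IsProbabilityMeasure ν]
    (hν : ∀ A : Set (Set.Icc a b), MeasurableSet A →
      ν A = ∑' k : ℕ, ENNReal.ofReal (p k) * ν ((fun x => g (f^[k] x)) ⁻¹' A))
    (μ : Measure (ℕ × Set.Icc a b))
    (hμ0 : ∀ A : Set (Set.Icc a b), MeasurableSet A →
      μ ({(0 : ℕ)} ×ˢ A) = ENNReal.ofReal (1 / (1 + E)) * ν A)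
    (hμk : ∀ (k : ℕ) (A : Set (Set.Icc a b)), MeasurableSet A →
      μ ({k + 1} ×ˢ A) =
        ∑' j : ℕ, ENNReal.ofReal (p (k + 1 + j) / (1 + E)) * ν ((f^[j + 1]) ⁻¹' A)) :
    IsProbabilityMeasure μ ∧ TOp a b p (fseq a b g f) μ = μ := by
  have hfm : Measurable f := hfc.measurable
  have hgm : Measurable g := hgc.measurable
  have hE0 : 0 ≤ E := by
    rw [hE]
    exact tsum_nonneg fun n => mul_nonneg (Nat.cast_nonneg n) (hp n)
  have h1E : (0:ℝ) < 1 + E := by linarith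
  set c : ENNReal := ENNReal.ofReal (1 / (1 + E)) with hc
  have hsplit : ∀ x : ℝ, 0 ≤ x → ENNReal.ofReal (x / (1 + E)) = ENNReal.ofReal x * c := by
    intro x hx
    rw [hc, div_eq_mul_one_div, ENNReal.ofReal_mul hx]
  have hfseqm : ∀ j, Measurable (fseq a b g f j) := by
    intro j
    unfold fseq
    split <;> assumption
  have hshift : ∀ F : ℕ → ENNReal, ∑' k : ℕ, F k = F 0 + ∑' k : ℕ, F (k + 1) :=
    fun F => tsum_eq_zero_add' ENNReal.summable
  -- key slice identity
  have key : ∀ (j : ℕ) (A : Set (Set.Icc a b)), MeasurableSet A →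
      μ ({j+1} ×ˢ (fseq a b g f j ⁻¹' A)) +
        ENNReal.ofReal (p j) * μ ({0} ×ˢ (fseq a b g f j ⁻¹' A)) = μ ({j} ×ˢ A) := by
    intro j A hA
    cases j with
    | zero =>
      have hfs : fseq a b g f 0 = g := by simp [fseq]
      rw [hfs]
      have hgA : MeasurableSet (g ⁻¹' A) := hgm hA
      rw [hμk 0 _ hgA, hμ0 _ hgA, hμ0 _ hA, hν A hA]
      have hre : ∀ k : ℕ, (fun x => g (f^[k] x)) ⁻¹' A = f^[k] ⁻¹' (g ⁻¹' A) := fun k => rfl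
      simp only [hre]
      have hz : ∑' k : ℕ, ENNReal.ofReal (p k) * ν (f^[k] ⁻¹' (g ⁻¹' A))
          = ENNReal.ofReal (p 0) * ν (g ⁻¹' A)
            + ∑' k : ℕ, ENNReal.ofReal (p (k+1)) * ν (f^[k+1] ⁻¹' (g ⁻¹' A)) := by
        rw [hshift fun k : ℕ => ENNReal.ofReal (p k) * ν (f^[k] ⁻¹' (g ⁻¹' A))]
        simp only [Function.iterate_zero, Set.preimage_id_eq, id_eq]
      rw [hz, mul_add, add_comm]
      congr 1
      · exact mul_left_comm _ _ _
      · rw [← ENNReal.tsum_mul_left]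
        apply tsum_congr
        intro j
        rw [hsplit _ (hp _)]
        have hnum : 0 + 1 + j = j + 1 := by omega
        rw [hnum]
        ring
    | succ k =>
      have hfs : fseq a b g f (k+1) = f := by simp [fseq]
      rw [hfs]
      have hfA : MeasurableSet (f ⁻¹' A) := hfm hA
      rw [hμk (k+1) _ hfA, hμ0 _ hfA, hμk k _ hA]
      rw [hshift fun j : ℕ => ENNReal.ofReal (p (k + 1 + j) / (1 + E)) * ν (f^[j + 1] ⁻¹' A)]
      have hiter : ∀ j : ℕ, ν (f^[j+1] ⁻¹' (f ⁻¹' A)) = ν (f^[j+1+1] ⁻¹' A) := by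
        intro j
        rw [Function.iterate_succ' f (j+1), Set.preimage_comp]
      have h2 : ∀ j : ℕ, ENNReal.ofReal (p (k + 1 + 1 + j) / (1 + E)) * ν (f^[j+1] ⁻¹' (f ⁻¹' A))
          = ENNReal.ofReal (p (k + 1 + (j+1)) / (1 + E)) * ν (f^[j+1+1] ⁻¹' A) := by
        intro j
        rw [hiter j]
        have hn : k + 1 + 1 + j = k + 1 + (j + 1) := by omega
        rw [hn]
      simp only [h2]
      rw [add_comm]
      congr 1
      rw [hsplit _ (hp _), hc]
      have h3 : k + 1 + 0 = k + 1 := by omega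
      rw [h3]
      simp only [zero_add, Function.iterate_one]
      ring
  constructor
  · constructor
    rw [decomp' μ Set.univ MeasurableSet.univ]
    have hpre : ∀ k : ℕ, (Prod.mk k ⁻¹' (Set.univ : Set (ℕ × Set.Icc a b))) = Set.univ := by
      intro k; rfl
    simp only [hpre]
    rw [hshift fun k : ℕ => μ ({k} ×ˢ (Set.univ : Set (Set.Icc a b)))]
    rw [hμ0 _ MeasurableSet.univ]
    have h2 : ∀ k : ℕ, μ ({k+1} ×ˢ (Set.univ : Set (Set.Icc a b)))
        = ∑' j : ℕ, ENNReal.ofReal (p (k+1+j)) * c := by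
      intro k
      rw [hμk k _ MeasurableSet.univ]
      congr 1
      ext j
      rw [Set.preimage_univ, measure_univ, mul_one, hsplit _ (hp _)]
    simp only [h2]
    simp only [ENNReal.tsum_mul_right]
    rw [double_tail (fun n => ENNReal.ofReal (p n))]
    have h3 : ∑' n : ℕ, (n : ENNReal) * ENNReal.ofReal (p n) = ENNReal.ofReal E := by
      rw [hE, ENNReal.ofReal_tsum_of_nonneg (fun n => mul_nonneg (Nat.cast_nonneg n) (hp n))
        hmean]
      congr 1
      ext n
      rw [ENNReal.ofReal_mul (Nat.cast_nonneg n), ENNReal.ofReal_natCast]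
    rw [h3, measure_univ, mul_one]
    calc c + ENNReal.ofReal E * c = (1 + ENNReal.ofReal E) * c := by ring
      _ = ENNReal.ofReal (1 + E) * c := by rw [ENNReal.ofReal_add zero_le_one hE0,
            ENNReal.ofReal_one]
      _ = ENNReal.ofReal ((1 + E) * (1 / (1 + E))) := by
            rw [hc, ← ENNReal.ofReal_mul (le_of_lt h1E)]
      _ = 1 := by rw [mul_one_div, div_self (ne_of_gt h1E), ENNReal.ofReal_one]
  · ext B hB
    rw [TOp, Measure.sum_apply _ hB, decomp' μ B hB]
    congr 1
    ext j
    have hm : Measurable (fun x : Set.Icc a b => (j, fseq a b g f j x)) :=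
      measurable_const.prodMk (hfseqm j)
    rw [Measure.map_apply hm hB]
    have hpre : (fun x : Set.Icc a b => (j, fseq a b g f j x)) ⁻¹' B
        = fseq a b g f j ⁻¹' (Prod.mk j ⁻¹' B) := rfl
    have hBj : MeasurableSet (Prod.mk j ⁻¹' B) := measurable_prodMk_left hB
    have hpm : MeasurableSet (fseq a b g f j ⁻¹' (Prod.mk j ⁻¹' B)) := hfseqm j hBj
    rw [hpre, Measure.add_apply, Measure.smul_apply, smul_eq_mul,
      slice_apply' a b μ (j+1) _ hpm, slice_apply' a b μ 0 _ hpm]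
    exact key j _ hBj

end
end
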